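/- If a nonnegative matrix A = [a_{ij}] satisfies sup_i Σ_j a_{ij}² ≤ L², then every matrix S with |s_{ij}| ≤ a_{ij} has Schur multiplier norm at most L. -/

import Mathlib

/-! Row `i` of `(M ⊙ X) u` is row `i` of `X` applied to the vector `(M i j * u j)_j`, so by
the operator-norm bound for `X`, `|((M ⊙ X) u)_i|² ≤ ‖X‖² ∑_j |M i j|² |u_j|²`. Summing over `i`
and exchanging the sums bounds `‖(M ⊙ X) u‖²` by `‖X‖²` times the largest column sum of
`|M i j|²` times `‖u‖²`. Taking adjoints turns columns into rows, and the infinite matrix is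
handled one finite section at a time. -/

open scoped ENNReal ComplexOrder

noncomputable def opNorm2 {m : Type*} [Fintype m] [DecidableEq m] (M : Matrix m m ℂ) : ℝ :=
  ‖Matrix.toEuclideanCLM (𝕜 := ℂ) M‖

noncomputable def schurNorm {m : Type*} [Fintype m] [DecidableEq m] (M : Matrix m m ℂ) : ℝ :=
  ⨆ X : {X : Matrix m m ℂ // opNorm2 X ≤ 1}, opNorm2 (M.hadamard X.1)

noncomputable def schurNormENN (A : ℕ → ℕ → ℂ) : ℝ≥0∞ :=
  ⨆ n : ℕ, ENNReal.ofReal (schurNorm (Matrix.of fun i j : Fin n => A i j))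

noncomputable def schurBound (P : Set (ℕ × ℕ)) : ℝ≥0∞ :=
  ⨆ S : {S : ℕ → ℕ → ℂ //
      (∀ i j, ‖S i j‖ ≤ 1) ∧ ∀ i j, (i, j) ∉ P → S i j = 0},
    schurNormENN S.1

noncomputable def matAbs {m : Type*} [Fintype m] [DecidableEq m] (T : Matrix m m ℂ) :
    Matrix m m ℂ :=
  ((Matrix.posSemidef_conjTranspose_mul_self T).1.eigenvectorUnitary : Matrix m m ℂ) *
    Matrix.diagonal ((↑) ∘ Real.sqrt ∘ (Matrix.posSemidef_conjTranspose_mul_self T).1.eigenvalues) *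
    (star ((Matrix.posSemidef_conjTranspose_mul_self T).1.eigenvectorUnitary : Matrix m m ℂ))

open Matrix Finset
open scoped Matrix.Norms.L2Operator

lemma Matrix.hadamard_mulVec_apply {R m n : Type*} [CommSemiring R] [Fintype n]
    (M X : Matrix m n R) (u : n → R) (i : m) :
    ((M ⊙ X) *ᵥ u) i = (X *ᵥ fun j => M i j * u j) i := by
  simp only [mulVec, dotProduct, hadamard_apply]
  exact sum_congr rfl fun j _ => by ring

section L2OpNorm

variable {𝕜 m n : Type*} [RCLike 𝕜] [Fintype m] [Fintype n] [DecidableEq n]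

lemma Matrix.sum_norm_sq_mulVec_le (A : Matrix m n 𝕜) (u : n → 𝕜) :
    ∑ i, ‖(A *ᵥ u) i‖ ^ 2 ≤ ‖A‖ ^ 2 * ∑ j, ‖u j‖ ^ 2 := by
  simpa [mul_pow, EuclideanSpace.norm_sq_eq] using
    pow_le_pow_left₀ (norm_nonneg _) (A.l2_opNorm_mulVec (WithLp.toLp 2 u)) 2

lemma Matrix.l2_opNorm_le_of_sum_norm_sq_mulVec_le (A : Matrix m n 𝕜) {C : ℝ} (hC : 0 ≤ C)
    (h : ∀ u : n → 𝕜, ∑ i, ‖(A *ᵥ u) i‖ ^ 2 ≤ C ^ 2 * ∑ j, ‖u j‖ ^ 2) : ‖A‖ ≤ C := by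
  rw [l2_opNorm_def]
  refine ContinuousLinearMap.opNorm_le_bound _ hC fun x => ?_
  refine le_of_pow_le_pow_left₀ two_ne_zero (by positivity) ?_
  simpa [mul_pow, EuclideanSpace.norm_sq_eq] using h x.ofLp

lemma Matrix.sum_norm_sq_hadamard_mulVec_le (M X : Matrix m n 𝕜) {L : ℝ}
    (hcol : ∀ j, ∑ i, ‖M i j‖ ^ 2 ≤ L ^ 2) (u : n → 𝕜) :
    ∑ i, ‖((M ⊙ X) *ᵥ u) i‖ ^ 2 ≤ (L * ‖X‖) ^ 2 * ∑ j, ‖u j‖ ^ 2 :=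
  calc ∑ i, ‖((M ⊙ X) *ᵥ u) i‖ ^ 2
      ≤ ∑ i, ∑ k, ‖(X *ᵥ fun j => M i j * u j) k‖ ^ 2 := by
        gcongr with i
        rw [hadamard_mulVec_apply]
        exact single_le_sum (f := fun k => ‖(X *ᵥ fun j => M i j * u j) k‖ ^ 2)
          (fun k _ => by positivity) (mem_univ i)
    _ ≤ ∑ i, ‖X‖ ^ 2 * ∑ j, ‖M i j * u j‖ ^ 2 := by
        gcongr with i
        exact X.sum_norm_sq_mulVec_le _
    _ = ‖X‖ ^ 2 * ∑ j, (∑ i, ‖M i j‖ ^ 2) * ‖u j‖ ^ 2 := by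
        simp only [← mul_sum, norm_mul, mul_pow, sum_mul]
        rw [sum_comm]
    _ ≤ ‖X‖ ^ 2 * ∑ j, L ^ 2 * ‖u j‖ ^ 2 := by
        gcongr with j
        exact hcol j
    _ = (L * ‖X‖) ^ 2 * ∑ j, ‖u j‖ ^ 2 := by
        rw [← mul_sum]; ring

lemma Matrix.l2_opNorm_hadamard_le_of_sum_sq_col_le (M X : Matrix m n 𝕜) {L : ℝ} (hL : 0 ≤ L)
    (hcol : ∀ j, ∑ i, ‖M i j‖ ^ 2 ≤ L ^ 2) : ‖M ⊙ X‖ ≤ L * ‖X‖ :=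
  (M ⊙ X).l2_opNorm_le_of_sum_norm_sq_mulVec_le (by positivity)
    (M.sum_norm_sq_hadamard_mulVec_le X hcol)

lemma Matrix.l2_opNorm_hadamard_le_of_sum_sq_row_le [DecidableEq m] (M X : Matrix m n 𝕜)
    {L : ℝ} (hL : 0 ≤ L) (hrow : ∀ i, ∑ j, ‖M i j‖ ^ 2 ≤ L ^ 2) : ‖M ⊙ X‖ ≤ L * ‖X‖ := by
  have hcol : ∀ i, ∑ j, ‖Mᴴ j i‖ ^ 2 ≤ L ^ 2 := by simpa using hrow
  have h := Mᴴ.l2_opNorm_hadamard_le_of_sum_sq_col_le Xᴴ hL hcol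
  rwa [← conjTranspose_hadamard, l2_opNorm_conjTranspose, l2_opNorm_conjTranspose,
    hadamard_comm] at h

end L2OpNorm

lemma schurNorm_le_of_sum_sq_row_le {m : Type*} [Fintype m] [DecidableEq m] (M : Matrix m m ℂ)
    {L : ℝ} (hL : 0 ≤ L) (hrow : ∀ i, ∑ j, ‖M i j‖ ^ 2 ≤ L ^ 2) : schurNorm M ≤ L := by
  have : Nonempty {X : Matrix m m ℂ // opNorm2 X ≤ 1} := ⟨⟨0, by simp [opNorm2]⟩⟩
  refine ciSup_le fun ⟨X, hX⟩ => ?_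
  -- `opNorm2` is definitionally the scoped `L2Operator` norm.
  calc ‖M ⊙ X‖ ≤ L * ‖X‖ := M.l2_opNorm_hadamard_le_of_sum_sq_row_le X hL hrow
    _ ≤ L := mul_le_of_le_one_right hL hX

lemma sum_fin_sq_le_of_tsum_ofReal_sq_le {f : ℕ → ℝ} {L : ℝ}
    (hf : ∑' j, ENNReal.ofReal (f j ^ 2) ≤ ENNReal.ofReal (L ^ 2)) (n : ℕ) :
    ∑ j : Fin n, f j ^ 2 ≤ L ^ 2 := by
  rw [Fin.sum_univ_eq_sum_range (fun j => f j ^ 2), ← ENNReal.ofReal_le_ofReal_iff (sq_nonneg L),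
    ENNReal.ofReal_sum_of_nonneg fun j _ => sq_nonneg (f j)]
  exact (ENNReal.sum_le_tsum _).trans hf

theorem stmt_1_general (A : ℕ → ℕ → ℝ) (L : ℝ) (hL : 0 ≤ L)
    (hrow : ∀ i, ∑' j, ENNReal.ofReal ((A i j) ^ 2) ≤ ENNReal.ofReal (L ^ 2))
    (S : ℕ → ℕ → ℂ) (hS : ∀ i j, ‖S i j‖ ≤ A i j) :
    schurNormENN S ≤ ENNReal.ofReal L := by
  refine iSup_le fun n => ENNReal.ofReal_le_ofReal <| schurNorm_le_of_sum_sq_row_le _ hL fun i => ?_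
  calc ∑ j : Fin n, ‖S i j‖ ^ 2 ≤ ∑ j : Fin n, A i j ^ 2 := by
        gcongr with j
        exact hS i j
    _ ≤ L ^ 2 := sum_fin_sq_le_of_tsum_ofReal_sq_le (hrow i) n

theorem stmt_1 (A : ℕ → ℕ → ℝ) (L : ℝ) (hL : 0 ≤ L)
    (hA : ∀ i j, 0 ≤ A i j)
    (hrow : ∀ i, ∑' j, ENNReal.ofReal ((A i j) ^ 2) ≤ ENNReal.ofReal (L ^ 2))
    (S : ℕ → ℕ → ℂ) (hS : ∀ i j, ‖S i j‖ ≤ A i j) :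
    schurNormENN S ≤ ENNReal.ofReal L :=
  stmt_1_general A L hL hrow S hS
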